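/- arXiv:1304.4570 — 2 statements merged into one kernel-verified Lean document; each statement's English description precedes it below -/
import Mathlib

section
/- Define C(d, J, k) = ∑_{j=1}^{J−1} (d−1)·d^j · (min(d^{J+1−j}, k))². Then for all integers d ≥ 2, J ≥ 2, and 2 ≤ k ≤ d^J, C(d, J, k) ≤ 2·d²·d^J·k. -/
/-!
Every term is at most both `(d - 1) d^j k²` and `(d - 1) d^(2J+2-j)`. Splitting the range of `j`
at `t = J - log_d k` and using the first bound below `t`, the second above it, leaves two geometric
sums; since `(d - 1) ∑_{i<n} d^i ≤ d^n`, each is at most `d^(J+2) k`.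
-/

/-- The first-pass operation-count bound of the ETP algorithm. -/
def etpFirstPassBound (d J k : ℕ) : ℕ :=
  ∑ j ∈ Finset.Icc 1 (J - 1), (d - 1) * d ^ j * (min (d ^ (J + 1 - j)) k) ^ 2

open Finset

namespace Nat

theorem sub_one_mul_sum_pow_le {d n : ℕ} {s : Finset ℕ} (hs : ∀ i ∈ s, i < n) :
    (d - 1) * ∑ i ∈ s, d ^ i ≤ d ^ n := by
  rcases d.eq_zero_or_pos with rfl | hd
  · simp
  calc (d - 1) * ∑ i ∈ s, d ^ i
      ≤ (d - 1) * ∑ i ∈ range n, d ^ i :=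
        Nat.mul_le_mul_left _ (sum_le_sum_of_subset fun i hi ↦ mem_range.2 (hs i hi))
    _ = d ^ n - 1 := by rw [mul_comm, geom_sum_mul_of_one_le hd]
    _ ≤ d ^ n := Nat.sub_le _ _

theorem sub_one_mul_sum_pow_sub_le {d m n : ℕ} {s : Finset ℕ} (hs : ∀ j ∈ s, m < j ∧ j ≤ n) :
    (d - 1) * ∑ j ∈ s, d ^ (n - j) ≤ d ^ (n - m) := by
  have hinj : Set.InjOn (n - ·) s := fun i hi j hj hij ↦ by
    have := hs i hi; have := hs j hj; simp only at hij; omega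
  rw [← sum_image hinj]
  refine sub_one_mul_sum_pow_le fun i hi ↦ ?_
  obtain ⟨j, hj, rfl⟩ := mem_image.1 hi
  have := hs j hj
  omega

end Nat

theorem etpFirstPassBound_le_add (d J k t : ℕ) :
    etpFirstPassBound d J k ≤ d ^ (t + 1) * k ^ 2 + d ^ (2 * J + 2 - t) := by
  rw [etpFirstPassBound, ← sum_filter_add_sum_filter_not _ (· ≤ t)]
  gcongr
  · calc ∑ j ∈ (Icc 1 (J - 1)).filter (· ≤ t), (d - 1) * d ^ j * (min (d ^ (J + 1 - j)) k) ^ 2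
        ≤ ((d - 1) * ∑ j ∈ (Icc 1 (J - 1)).filter (· ≤ t), d ^ j) * k ^ 2 := by
          rw [mul_sum, sum_mul]
          gcongr
          exact min_le_right _ _
      _ ≤ d ^ (t + 1) * k ^ 2 := by
          gcongr
          exact Nat.sub_one_mul_sum_pow_le fun j hj ↦ by simp only [mem_filter, mem_Icc] at hj; omega
  · calc ∑ j ∈ (Icc 1 (J - 1)).filter (¬ · ≤ t), (d - 1) * d ^ j * (min (d ^ (J + 1 - j)) k) ^ 2
        ≤ (d - 1) * ∑ j ∈ (Icc 1 (J - 1)).filter (¬ · ≤ t), d ^ (2 * J + 2 - j) := by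
          rw [mul_sum]
          refine sum_le_sum fun j hj ↦ ?_
          have hjJ : j ≤ J + 1 := by simp only [mem_filter, mem_Icc] at hj; omega
          calc (d - 1) * d ^ j * (min (d ^ (J + 1 - j)) k) ^ 2
              ≤ (d - 1) * d ^ j * (d ^ (J + 1 - j)) ^ 2 := by gcongr; exact min_le_left _ _
            _ = (d - 1) * d ^ (2 * J + 2 - j) := by
                rw [← pow_mul, mul_assoc, ← pow_add]
                congr 2
                omega
      _ ≤ d ^ (2 * J + 2 - t) :=
          Nat.sub_one_mul_sum_pow_sub_le fun j hj ↦ by simp only [mem_filter, mem_Icc] at hj; omega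

theorem first_pass_complexity_general (d J k : ℕ) (hd : 2 ≤ d)
    (hk : 2 ≤ k) (hkN : k ≤ d ^ J) :
    etpFirstPassBound d J k ≤ 2 * d ^ 2 * d ^ J * k := by
  set L := Nat.log d k
  have hkL : d ^ L ≤ k := Nat.pow_log_le_self d (by omega)
  have hkL' : k ≤ d ^ (L + 1) := (Nat.lt_pow_succ_log_self hd k).le
  have hLJ : L ≤ J := (Nat.pow_le_pow_iff_right hd).1 (hkL.trans hkN)
  have hlow : d ^ (J - L + 1) * k ^ 2 ≤ d ^ (J + 2) * k :=
    calc d ^ (J - L + 1) * k ^ 2 = d ^ (J - L + 1) * k * k := by ring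
      _ ≤ d ^ (J - L + 1) * d ^ (L + 1) * k := by gcongr
      _ = d ^ (J + 2) * k := by rw [← pow_add]; congr 2; omega
  have hhigh : d ^ (2 * J + 2 - (J - L)) ≤ d ^ (J + 2) * k :=
    calc d ^ (2 * J + 2 - (J - L)) = d ^ (J + 2) * d ^ L := by rw [← pow_add]; congr 1; omega
      _ ≤ d ^ (J + 2) * k := by gcongr
  calc etpFirstPassBound d J k ≤ d ^ (J - L + 1) * k ^ 2 + d ^ (2 * J + 2 - (J - L)) :=
        etpFirstPassBound_le_add d J k (J - L)
    _ ≤ d ^ (J + 2) * k + d ^ (J + 2) * k := add_le_add hlow hhigh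
    _ = 2 * d ^ 2 * d ^ J * k := by ring

theorem first_pass_complexity (d J k : ℕ) (hd : 2 ≤ d) (hJ : 2 ≤ J)
    (hk : 2 ≤ k) (hkN : k ≤ d ^ J) :
    etpFirstPassBound d J k ≤ 2 * d ^ 2 * d ^ J * k :=
  first_pass_complexity_general d J k hd hk hkN
end

section
/- For any finite rooted tree and any node v with children c_1, ..., c_m, the maximum total weight of a subtree rooted at v of cardinality l (containing v, closed under parents within the subtree of v) equals w(v) plus the maximum over all ways to write l − 1 = l_1 + ... + l_m (with each l_i ≥ 0) of ∑_i (maximum weight of a subtree of cardinality l_i rooted at c_i, taken as 0 when l_i = 0). -/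
/-- `S` is a subtree of cardinality `l` rooted at `v`: it contains `v`, every element is a
descendant of `v` (under iterates of the parent map), and it is closed under taking parents
(down to `v`). -/
def IsSubtreeAt {V : Type*} (parent : V → V) (v : V) (S : Finset V) : Prop :=
  v ∈ S ∧ (∀ u ∈ S, ∃ n, parent^[n] u = v) ∧ (∀ u ∈ S, u ≠ v → parent u ∈ S)

/-- Maximum total weight of a subtree of cardinality `l` rooted at `v`
(`0` if no such subtree exists, in particular for `l = 0`). -/
noncomputable def maxSubtreeWeight {V : Type*} [DecidableEq V]
    (parent : V → V) (w : V → ℝ) (v : V) (l : ℕ) : ℝ :=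
  sSup {x : ℝ | ∃ S : Finset V, IsSubtreeAt parent v S ∧ S.card = l ∧ x = ∑ u ∈ S, w u}

section AuxDP

variable {V : Type*}

lemma dpAux_iter_fix (parent : V → V) (root : V)
    (hroot : parent root = root) (hacyc : ∀ u, ∃ n, parent^[n] u = root)
    {v : V} {k : ℕ} (hk : 0 < k) (hfix : parent^[k] v = v) : v = root := by
  obtain ⟨n, hn⟩ := hacyc v
  have hmul : ∀ m, parent^[m * k] v = v := by
    intro m; induction m with
    | zero => simp
    | succ m ih => rw [Nat.succ_mul, Function.iterate_add_apply, hfix, ih]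
  have h2 : n ≤ (n + 1) * k := by nlinarith
  have h1 : parent^[(n + 1) * k] v = v := hmul (n + 1)
  rw [show (n + 1) * k = ((n + 1) * k - n) + n from (Nat.sub_add_cancel h2).symm,
      Function.iterate_add_apply, hn, Function.iterate_fixed hroot] at h1
  exact h1.symm

lemma dpAux_child_iter (parent : V → V) (root : V)
    (hroot : parent root = root) (hacyc : ∀ u, ∃ n, parent^[n] u = root)
    {v c1 c2 : V} (h1 : parent c1 = v) (h2 : parent c2 = v) (h2' : c2 ≠ v)
    {m : ℕ} (h : parent^[m] c1 = c2) : c1 = c2 := by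
  cases m with
  | zero => exact h
  | succ m =>
    exfalso; apply h2'
    have hc2 : parent^[m] v = c2 := by
      rw [← h, Function.iterate_succ_apply, h1]
    have hvfix : parent^[m + 1] v = v := by
      rw [Function.iterate_succ_apply', hc2, h2]
    have hv : v = root := dpAux_iter_fix parent root hroot hacyc (Nat.succ_pos m) hvfix
    rw [← hc2, hv]
    exact Function.iterate_fixed hroot m

lemma dpAux_child_unique (parent : V → V) (root : V)
    (hroot : parent root = root) (hacyc : ∀ u, ∃ n, parent^[n] u = root)
    {v c1 c2 u : V} (h1 : parent c1 = v) (h1' : c1 ≠ v)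
    (h2 : parent c2 = v) (h2' : c2 ≠ v)
    (hd1 : ∃ a, parent^[a] u = c1) (hd2 : ∃ b, parent^[b] u = c2) : c1 = c2 := by
  obtain ⟨a, ha⟩ := hd1; obtain ⟨b, hb⟩ := hd2
  rcases le_total a b with hab | hab
  · have h : parent^[b - a] c1 = c2 := by
      rw [← ha, ← Function.iterate_add_apply, Nat.sub_add_cancel hab, hb]
    exact dpAux_child_iter parent root hroot hacyc h1 h2 h2' h
  · have h : parent^[a - b] c2 = c1 := by
      rw [← hb, ← Function.iterate_add_apply, Nat.sub_add_cancel hab, ha]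
    exact (dpAux_child_iter parent root hroot hacyc h2 h1 h1' h).symm

lemma dpAux_not_desc_self (parent : V → V) (root : V)
    (hroot : parent root = root) (hacyc : ∀ u, ∃ n, parent^[n] u = root)
    {v c : V} (h : parent c = v) (h' : c ≠ v) : ¬ ∃ n, parent^[n] v = c := by
  rintro ⟨n, hn⟩
  apply h'
  have hvfix : parent^[n + 1] v = v := by rw [Function.iterate_succ_apply', hn, h]
  have hv : v = root := dpAux_iter_fix parent root hroot hacyc (Nat.succ_pos n) hvfix
  rw [← hn, hv]
  exact Function.iterate_fixed hroot n

lemma dpAux_chain_mem (parent : V → V) {v : V} {S : Finset V}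
    (hS : IsSubtreeAt parent v S) {u : V} (hu : u ∈ S) :
    ∀ k, (∀ j, j < k → parent^[j] u ≠ v) → parent^[k] u ∈ S := by
  intro k; induction k with
  | zero => intro _; simpa using hu
  | succ k ih =>
    intro h
    have h1 : parent^[k] u ∈ S := ih (fun j hj => h j (hj.trans (Nat.lt_succ_self k)))
    rw [Function.iterate_succ_apply']
    exact hS.2.2 _ h1 (h k (Nat.lt_succ_self k))

lemma dpAux_exists_child (parent : V → V) {v : V} {S : Finset V}
    (hS : IsSubtreeAt parent v S) {u : V} (hu : u ∈ S) (huv : u ≠ v) :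
    ∃ c, parent c = v ∧ c ≠ v ∧ c ∈ S ∧ ∃ m, parent^[m] u = c := by
  classical
  have hex := hS.2.1 u hu
  set n := Nat.find hex with hndef
  have hn : parent^[n] u = v := Nat.find_spec hex
  have hmin : ∀ j, j < n → parent^[j] u ≠ v := fun j hj => Nat.find_min hex hj
  have hn1 : 1 ≤ n := by
    rcases Nat.eq_zero_or_pos n with h | h
    · exfalso; apply huv; rw [← hn, h]; simp
    · exact h
  refine ⟨parent^[n - 1] u, ?_, ?_, ?_, n - 1, rfl⟩
  · have h := Function.iterate_succ_apply' parent (n - 1) u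
    rw [Nat.succ_eq_add_one, Nat.sub_add_cancel hn1] at h
    rw [← h]; exact hn
  · exact hmin (n - 1) (Nat.sub_lt hn1 one_pos)
  · exact dpAux_chain_mem parent hS hu (n - 1)
      (fun j hj => hmin j (hj.trans_le (Nat.sub_le n 1)))

lemma dpAux_extend [DecidableEq V] (parent : V → V) {v : V} {T : Finset V}
    (hT : IsSubtreeAt parent v T) {u : V} (hu : u ∉ T) (hud : ∃ n, parent^[n] u = v) :
    ∃ x, x ∉ T ∧ IsSubtreeAt parent v (insert x T) := by
  classical
  obtain ⟨n, hn⟩ := hud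
  have hex : ∃ k, parent^[k] u ∈ T := ⟨n, by rw [hn]; exact hT.1⟩
  set k := Nat.find hex with hkdef
  have hk : parent^[k] u ∈ T := Nat.find_spec hex
  have hkmin : ∀ j, j < k → parent^[j] u ∉ T := fun j hj => Nat.find_min hex hj
  have hk1 : 1 ≤ k := by
    rcases Nat.eq_zero_or_pos k with h | h
    · exfalso; apply hu; have := hk; rw [h] at this; simpa using this
    · exact h
  have hkn : k ≤ n := Nat.find_le (by rw [hn]; exact hT.1)
  refine ⟨parent^[k - 1] u, hkmin (k - 1) (Nat.sub_lt hk1 one_pos), ?_, ?_, ?_⟩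
  · exact Finset.mem_insert.2 (Or.inr hT.1)
  · intro x hx
    rcases Finset.mem_insert.1 hx with rfl | hx
    · refine ⟨n - (k - 1), ?_⟩
      rw [← Function.iterate_add_apply, Nat.sub_add_cancel (le_trans (Nat.sub_le k 1) hkn)]
      exact hn
    · exact hT.2.1 x hx
  · intro x hx hxv
    rcases Finset.mem_insert.1 hx with rfl | hx
    · apply Finset.mem_insert.2; right
      have h := Function.iterate_succ_apply' parent (k - 1) u
      rw [Nat.succ_eq_add_one, Nat.sub_add_cancel hk1] at h
      rw [← h]; exact hk
    · exact Finset.mem_insert.2 (Or.inr (hT.2.2 x hx hxv))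

lemma dpAux_grow [DecidableEq V] (parent : V → V) {v : V} {T S : Finset V}
    (hT : IsSubtreeAt parent v T) (hS : IsSubtreeAt parent v S) (hle : T.card ≤ S.card) :
    ∃ T', IsSubtreeAt parent v T' ∧ T'.card = S.card ∧ T ⊆ T' := by
  classical
  obtain ⟨d, hd⟩ : ∃ d, S.card = T.card + d := ⟨S.card - T.card, by omega⟩
  clear hle
  induction d generalizing T with
  | zero => exact ⟨T, hT, by omega, subset_rfl⟩
  | succ d ih =>
    have hlt : T.card < S.card := by omega
    have hns : ¬ S ⊆ T := fun h => absurd (Finset.card_le_card h) (by omega)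
    obtain ⟨u, huS, huT⟩ := Finset.not_subset.1 hns
    obtain ⟨x, hxT, hins⟩ := dpAux_extend parent hT huT (hS.2.1 u huS)
    obtain ⟨T', h1, h2, h3⟩ := ih hins (by rw [Finset.card_insert_of_notMem hxT]; omega)
    exact ⟨T', h1, h2, (Finset.subset_insert x T).trans h3⟩

end AuxDP

section DecompDP
variable {V : Type*} [Fintype V] [DecidableEq V]

/-- Composition: gluing subtrees at the children onto `v`. -/
lemma dpAux_compose (parent : V → V) (root : V)
    (hroot : parent root = root) (hacyc : ∀ u, ∃ n, parent^[n] u = root)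
    (v : V) (g : V → Finset V)
    (hg : ∀ c ∈ Finset.univ.filter (fun c => parent c = v ∧ c ≠ v),
      g c = ∅ ∨ IsSubtreeAt parent c (g c)) :
    IsSubtreeAt parent v
      (insert v ((Finset.univ.filter (fun c => parent c = v ∧ c ≠ v)).biUnion g)) ∧
    (insert v ((Finset.univ.filter (fun c => parent c = v ∧ c ≠ v)).biUnion g)).card
      = 1 + ∑ c ∈ Finset.univ.filter (fun c => parent c = v ∧ c ≠ v), (g c).card ∧
    ∀ w : V → ℝ,
      (∑ u ∈ insert v ((Finset.univ.filter (fun c => parent c = v ∧ c ≠ v)).biUnion g), w u)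
      = w v + ∑ c ∈ Finset.univ.filter (fun c => parent c = v ∧ c ≠ v), ∑ u ∈ g c, w u := by
  classical
  set C := Finset.univ.filter (fun c => parent c = v ∧ c ≠ v) with hC
  have hCmem : ∀ c, c ∈ C ↔ parent c = v ∧ c ≠ v := by
    intro c; simp [hC]
  have hdesc : ∀ c ∈ C, ∀ u ∈ g c, ∃ m, parent^[m] u = c := by
    intro c hc u hu
    rcases hg c hc with h | h
    · rw [h] at hu; simp at hu
    · exact h.2.1 u hu
  have hdescv : ∀ c ∈ C, ∀ u ∈ g c, ∃ m, parent^[m] u = v := by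
    intro c hc u hu
    obtain ⟨m, hm⟩ := hdesc c hc u hu
    refine ⟨m + 1, ?_⟩
    rw [Function.iterate_succ_apply', hm, ((hCmem c).1 hc).1]
  have hvg : ∀ c ∈ C, v ∉ g c := by
    intro c hc hv
    obtain ⟨hc1, hc2⟩ := (hCmem c).1 hc
    exact dpAux_not_desc_self parent root hroot hacyc hc1 hc2 (hdesc c hc v hv)
  have hvbu : v ∉ C.biUnion g := by
    rw [Finset.mem_biUnion]; rintro ⟨c, hc, hv⟩; exact hvg c hc hv
  have hdisj : ∀ c1 ∈ C, ∀ c2 ∈ C, c1 ≠ c2 → Disjoint (g c1) (g c2) := by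
    intro c1 hc1 c2 hc2 hne
    rw [Finset.disjoint_left]
    intro u hu1 hu2
    obtain ⟨h11, h12⟩ := (hCmem c1).1 hc1
    obtain ⟨h21, h22⟩ := (hCmem c2).1 hc2
    exact hne (dpAux_child_unique parent root hroot hacyc h11 h12 h21 h22
      (hdesc c1 hc1 u hu1) (hdesc c2 hc2 u hu2))
  refine ⟨⟨Finset.mem_insert_self v _, ?_, ?_⟩, ?_, ?_⟩
  · intro u hu
    rcases Finset.mem_insert.1 hu with rfl | hu
    · exact ⟨0, rfl⟩
    · obtain ⟨c, hc, hu⟩ := Finset.mem_biUnion.1 hu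
      exact hdescv c hc u hu
  · intro u hu huv
    rcases Finset.mem_insert.1 hu with rfl | hu
    · exact absurd rfl huv
    · obtain ⟨c, hc, hu⟩ := Finset.mem_biUnion.1 hu
      rcases hg c hc with h | h
      · rw [h] at hu; simp at hu
      · by_cases huc : u = c
        · subst huc
          rw [((hCmem u).1 hc).1]
          exact Finset.mem_insert_self v _
        · exact Finset.mem_insert.2 (Or.inr (Finset.mem_biUnion.2 ⟨c, hc, h.2.2 u hu huc⟩))
  · rw [Finset.card_insert_of_notMem hvbu, Finset.card_biUnion hdisj]
    omega
  · intro w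
    rw [Finset.sum_insert hvbu, Finset.sum_biUnion]
    intro c1 hc1 c2 hc2 hne
    exact hdisj c1 hc1 c2 hc2 hne

/-- Decomposition of a subtree at `v` into `v` plus subtrees at the children. -/
lemma dpAux_decomp (parent : V → V) (root : V)
    (hroot : parent root = root) (hacyc : ∀ u, ∃ n, parent^[n] u = root)
    {v : V} {S : Finset V} (hS : IsSubtreeAt parent v S) (w : V → ℝ) (hw : ∀ u, 0 ≤ w u) :
    ∃ f : V → ℕ,
      (∀ c, f c ≠ 0 → parent c = v ∧ c ≠ v) ∧
      (∑ c ∈ Finset.univ.filter (fun c => parent c = v ∧ c ≠ v), f c) = S.card - 1 ∧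
      (∑ u ∈ S, w u) ≤ w v +
        ∑ c ∈ Finset.univ.filter (fun c => parent c = v ∧ c ≠ v),
          maxSubtreeWeight parent w c (f c) := by
  classical
  set C := Finset.univ.filter (fun c => parent c = v ∧ c ≠ v) with hC
  have hCmem : ∀ c, c ∈ C ↔ parent c = v ∧ c ≠ v := by
    intro c; simp [hC]
  set T : V → Finset V := fun c => S.filter (fun u => ∃ n, parent^[n] u = c) with hT
  have hTsub : ∀ c, T c ⊆ S := fun c => Finset.filter_subset _ _
  have hTmem : ∀ c u, u ∈ T c ↔ u ∈ S ∧ ∃ n, parent^[n] u = c := by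
    intro c u; simp [hT]
  have hTsubtree : ∀ c ∈ C, (T c).Nonempty → IsSubtreeAt parent c (T c) := by
    intro c hc hne
    obtain ⟨hc1, hc2⟩ := (hCmem c).1 hc
    have hcT : c ∈ T c := by
      obtain ⟨u, hu⟩ := hne
      obtain ⟨huS, m, hm⟩ := (hTmem c u).1 hu
      have hchain : ∀ j, j < m → parent^[j] u ≠ v := by
        intro j hj hjv
        apply dpAux_not_desc_self parent root hroot hacyc hc1 hc2
        refine ⟨m - j, ?_⟩
        rw [← hjv, ← Function.iterate_add_apply, Nat.sub_add_cancel hj.le]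
        exact hm
      have hcS : parent^[m] u ∈ S := dpAux_chain_mem parent hS huS m hchain
      rw [hm] at hcS
      exact (hTmem c c).2 ⟨hcS, 0, rfl⟩
    refine ⟨hcT, ?_, ?_⟩
    · intro u hu; exact ((hTmem c u).1 hu).2
    · intro u hu huc
      obtain ⟨huS, m, hm⟩ := (hTmem c u).1 hu
      have huv : u ≠ v := by
        rintro rfl
        exact dpAux_not_desc_self parent root hroot hacyc hc1 hc2 ⟨m, hm⟩
      have hm1 : m ≠ 0 := by rintro rfl; exact huc hm
      refine (hTmem c (parent u)).2 ⟨hS.2.2 u huS huv, m - 1, ?_⟩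
      have h := Function.iterate_succ_apply parent (m - 1) u
      rw [Nat.succ_eq_add_one, Nat.sub_add_cancel (Nat.one_le_iff_ne_zero.2 hm1)] at h
      rw [← h]; exact hm
  have hvT : ∀ c ∈ C, v ∉ T c := by
    intro c hc hv
    obtain ⟨hc1, hc2⟩ := (hCmem c).1 hc
    exact dpAux_not_desc_self parent root hroot hacyc hc1 hc2 ((hTmem c v).1 hv).2
  have hvbu : v ∉ C.biUnion T := by
    rw [Finset.mem_biUnion]; rintro ⟨c, hc, hv⟩; exact hvT c hc hv
  have hdisj : ∀ c1 ∈ C, ∀ c2 ∈ C, c1 ≠ c2 → Disjoint (T c1) (T c2) := by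
    intro c1 hc1 c2 hc2 hne
    rw [Finset.disjoint_left]
    intro u hu1 hu2
    obtain ⟨h11, h12⟩ := (hCmem c1).1 hc1
    obtain ⟨h21, h22⟩ := (hCmem c2).1 hc2
    exact hne (dpAux_child_unique parent root hroot hacyc h11 h12 h21 h22
      ((hTmem c1 u).1 hu1).2 ((hTmem c2 u).1 hu2).2)
  have hcover : S = insert v (C.biUnion T) := by
    ext u
    constructor
    · intro hu
      by_cases huv : u = v
      · subst huv; exact Finset.mem_insert_self _ _
      · obtain ⟨c, hc1, hc2, _, hm⟩ := dpAux_exists_child parent hS hu huv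
        exact Finset.mem_insert.2 (Or.inr (Finset.mem_biUnion.2
          ⟨c, (hCmem c).2 ⟨hc1, hc2⟩, (hTmem c u).2 ⟨hu, hm⟩⟩))
    · intro hu
      rcases Finset.mem_insert.1 hu with rfl | hu
      · exact hS.1
      · obtain ⟨c, _, hu⟩ := Finset.mem_biUnion.1 hu
        exact hTsub c hu
  have hcard : S.card = 1 + ∑ c ∈ C, (T c).card := by
    rw [hcover, Finset.card_insert_of_notMem hvbu, Finset.card_biUnion hdisj]
    omega
  have hsum : (∑ u ∈ S, w u) = w v + ∑ c ∈ C, ∑ u ∈ T c, w u := by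
    rw [hcover, Finset.sum_insert hvbu, Finset.sum_biUnion hdisj]
  refine ⟨fun c => if c ∈ C then (T c).card else 0, ?_, ?_, ?_⟩
  · intro c hc
    by_cases h : c ∈ C
    · exact (hCmem c).1 h
    · simp [h] at hc
  · rw [Finset.sum_congr rfl (fun c hc => if_pos hc)]
    omega
  · rw [hsum]
    gcongr with c hc
    simp only [if_pos hc]
    rcases Finset.eq_empty_or_nonempty (T c) with he | hne
    · rw [he]
      simp only [Finset.sum_empty, Finset.card_empty]
      apply Real.sSup_nonneg
      rintro x ⟨S', _, _, rfl⟩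
      exact Finset.sum_nonneg fun u _ => hw u
    · apply le_csSup
      · have hsub : {x : ℝ | ∃ S' : Finset V, IsSubtreeAt parent c S' ∧ S'.card = (T c).card
            ∧ x = ∑ u ∈ S', w u} ⊆ Set.range (fun S' : Finset V => ∑ u ∈ S', w u) := by
          rintro x ⟨S', _, _, rfl⟩; exact ⟨S', rfl⟩
        exact ((Set.finite_range _).subset hsub).bddAbove
      · exact ⟨T c, hTsubtree c hc hne, rfl, rfl⟩
end DecompDP


theorem dp_principle_of_optimality {V : Type*} [Fintype V] [DecidableEq V]
    (parent : V → V) (root : V) (w : V → ℝ)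
    (hw : ∀ u, 0 ≤ w u)
    (hroot : parent root = root)
    (hacyc : ∀ u, ∃ n, parent^[n] u = root)
    (v : V) (l : ℕ) (hl : 1 ≤ l)
    (hfeas : ∃ S : Finset V, IsSubtreeAt parent v S ∧ S.card = l) :
    maxSubtreeWeight parent w v l =
      w v + sSup {x : ℝ | ∃ f : V → ℕ,
        (∀ c, f c ≠ 0 → parent c = v ∧ c ≠ v) ∧
        (∑ c ∈ Finset.univ.filter (fun c => parent c = v ∧ c ≠ v), f c) = l - 1 ∧
        x = ∑ c ∈ Finset.univ.filter (fun c => parent c = v ∧ c ≠ v),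
              maxSubtreeWeight parent w c (f c)} := by
  classical
  obtain ⟨S0, hS0, hS0card⟩ := hfeas
  set C := Finset.univ.filter (fun c => parent c = v ∧ c ≠ v) with hC
  set B : Set ℝ := {x : ℝ | ∃ f : V → ℕ,
        (∀ c, f c ≠ 0 → parent c = v ∧ c ≠ v) ∧
        (∑ c ∈ C, f c) = l - 1 ∧
        x = ∑ c ∈ C, maxSubtreeWeight parent w c (f c)} with hB
  have hfin : ∀ (c : V) (k : ℕ), {x : ℝ | ∃ S : Finset V,
      IsSubtreeAt parent c S ∧ S.card = k ∧ x = ∑ u ∈ S, w u}.Finite := by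
    intro c k
    apply Set.Finite.subset (Set.finite_range (fun S : Finset V => ∑ u ∈ S, w u))
    rintro x ⟨S, _, _, rfl⟩; exact ⟨S, rfl⟩
  have hattain : ∀ (c : V) (k : ℕ), {x : ℝ | ∃ S : Finset V,
      IsSubtreeAt parent c S ∧ S.card = k ∧ x = ∑ u ∈ S, w u}.Nonempty →
      ∃ S : Finset V, IsSubtreeAt parent c S ∧ S.card = k ∧
        (∑ u ∈ S, w u) = maxSubtreeWeight parent w c k := by
    intro c k hne
    obtain ⟨S, h1, h2, h3⟩ := hne.csSup_mem (hfin c k)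
    exact ⟨S, h1, h2, h3.symm⟩
  have hmswle : ∀ (c : V) (k : ℕ),
      maxSubtreeWeight parent w c k ≤ ∑ u ∈ Finset.univ, w u := by
    intro c k
    apply Real.sSup_le
    · rintro x ⟨S, _, _, rfl⟩
      exact Finset.sum_le_sum_of_subset_of_nonneg (Finset.subset_univ S) (fun u _ _ => hw u)
    · exact Finset.sum_nonneg fun u _ => hw u
  have hBbdd : BddAbove B := by
    refine ⟨(C.card : ℝ) * (∑ u ∈ Finset.univ, w u), ?_⟩
    rintro x ⟨f, hf1, hf2, rfl⟩
    calc ∑ c ∈ C, maxSubtreeWeight parent w c (f c)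
        ≤ ∑ c ∈ C, ∑ u ∈ Finset.univ, w u := Finset.sum_le_sum fun c _ => hmswle c (f c)
      _ = (C.card : ℝ) * (∑ u ∈ Finset.univ, w u) := by
          rw [Finset.sum_const, nsmul_eq_mul]
  have hBne : B.Nonempty := by
    obtain ⟨f, hf1, hf2, _⟩ := dpAux_decomp parent root hroot hacyc hS0 w hw
    rw [← hC] at hf2
    rw [hS0card] at hf2
    exact ⟨∑ c ∈ C, maxSubtreeWeight parent w c (f c), f, hf1, hf2, rfl⟩
  have hle : maxSubtreeWeight parent w v l ≤ w v + sSup B := by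
    rw [maxSubtreeWeight]
    have hAne : {x : ℝ | ∃ S : Finset V, IsSubtreeAt parent v S ∧ S.card = l ∧
        x = ∑ u ∈ S, w u}.Nonempty := ⟨∑ u ∈ S0, w u, S0, hS0, hS0card, rfl⟩
    apply csSup_le hAne
    rintro x ⟨S, hSsub, hScard, rfl⟩
    obtain ⟨f, hf1, hf2, hf3⟩ := dpAux_decomp parent root hroot hacyc hSsub w hw
    rw [← hC] at hf2 hf3
    rw [hScard] at hf2
    have hmem : (∑ c ∈ C, maxSubtreeWeight parent w c (f c)) ∈ B := ⟨f, hf1, hf2, rfl⟩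
    have hle2 := le_csSup hBbdd hmem
    linarith
  have hge : w v + sSup B ≤ maxSubtreeWeight parent w v l := by
    have h2 : sSup B ≤ maxSubtreeWeight parent w v l - w v := by
      apply csSup_le hBne
      rintro x ⟨f, hf1, hf2, rfl⟩
      rw [le_sub_iff_add_le]
      -- build attaining (or empty) subtrees at the children
      have hgex : ∀ c, ∃ G : Finset V, (G = ∅ ∨ IsSubtreeAt parent c G) ∧
          G.card ≤ f c ∧ (∑ u ∈ G, w u) = maxSubtreeWeight parent w c (f c) := by
        intro c
        by_cases h' : {x : ℝ | ∃ S : Finset V, IsSubtreeAt parent c S ∧ S.card = f c ∧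
            x = ∑ u ∈ S, w u}.Nonempty
        · obtain ⟨S, h1, h2, h3⟩ := hattain c (f c) h'
          exact ⟨S, Or.inr h1, le_of_eq h2, h3⟩
        · have hempty : {x : ℝ | ∃ S : Finset V, IsSubtreeAt parent c S ∧ S.card = f c ∧
              x = ∑ u ∈ S, w u} = ∅ := Set.not_nonempty_iff_eq_empty.1 h'
          have hz : maxSubtreeWeight parent w c (f c) = 0 := by
            rw [maxSubtreeWeight, hempty, Real.sSup_empty]
          exact ⟨∅, Or.inl rfl, Nat.zero_le _, by simp [hz]⟩
      choose g hg1 hg2 hg3 using hgex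
      obtain ⟨hcomp1, hcomp2, hcomp3⟩ :=
        dpAux_compose parent root hroot hacyc v g (fun c _ => hg1 c)
      rw [← hC] at hcomp1 hcomp2
      have hcard : (insert v (C.biUnion g)).card ≤ l := by
        rw [hcomp2]
        have hsum : ∑ c ∈ C, (g c).card ≤ ∑ c ∈ C, f c :=
          Finset.sum_le_sum fun c _ => hg2 c
        omega
      obtain ⟨T', hT'1, hT'2, hT'3⟩ := dpAux_grow parent hcomp1 hS0
        (by rw [hS0card]; exact hcard)
      rw [hS0card] at hT'2
      have hT'w : (∑ u ∈ insert v (C.biUnion g), w u) ≤ ∑ u ∈ T', w u :=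
        Finset.sum_le_sum_of_subset_of_nonneg hT'3 (fun u _ _ => hw u)
      have hxw : (∑ u ∈ insert v (C.biUnion g), w u)
          = w v + ∑ c ∈ C, maxSubtreeWeight parent w c (f c) := by
        have h3 := hcomp3 w
        rw [← hC] at h3
        rw [h3]
        congr 1
        exact Finset.sum_congr rfl fun c _ => hg3 c
      have hfinal : (∑ u ∈ T', w u) ≤ maxSubtreeWeight parent w v l :=
        le_csSup (hfin v l).bddAbove ⟨T', hT'1, hT'2, rfl⟩
      linarith
    linarith
  exact le_antisymm hle hge
end
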